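/- Two-sided bounds for the function 𝔤_± (Lemma B.1). Let q > 0 and for w, k ∈ ℝ define 𝔤_±(w,k) := ±q ∫_k^w |s|^{q−1}(s−k)_± ds. Then there exists a constant γ = γ(q) ≥ 1 such that for all a, b ∈ ℝ: γ^{−1} (|a|+|b|)^{q−1} (a−b)_±² ≤ 𝔤_±(a,b) ≤ γ (|a|+|b|)^{q−1} (a−b)_±², where both sides are interpreted as 0 when a = b. -/

import Mathlib

open MeasureTheory Set Filter Metric

noncomputable section

abbrev ESp (N : ℕ) := EuclideanSpace ℝ (Fin N)

variable {N : ℕ}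

/-- Open cube of center `x₀` and side `2ρ`, faces parallel to the coordinate planes. -/
def cube (x₀ : ESp N) (ρ : ℝ) : Set (ESp N) := {x | ∀ i, |x i - x₀ i| < ρ}

/-- Backward parabolic cylinder `(x₀,t₀) + Q_ρ(θ) = K_ρ(x₀) × (t₀ - θρ^p, t₀]`. -/
def bkCyl (p : ℝ) (x₀ : ESp N) (t₀ ρ θ : ℝ) : Set (ESp N × ℝ) :=
  cube x₀ ρ ×ˢ Ioc (t₀ - θ * ρ ^ p) t₀

/-- Time interval `I(t₀,ρ,h) = (t₀ - hρ^p, t₀ + hρ^p)`. -/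
def tI (p t₀ ρ h : ℝ) : Set ℝ := Ioo (t₀ - h * ρ ^ p) (t₀ + h * ρ ^ p)

/-- Spatial divergence of a vector field on `ℝ^N`. -/
def sdiv (ψ : ESp N → ESp N) (x : ESp N) : ℝ :=
  ∑ i, fderiv ℝ ψ x (EuclideanSpace.single i 1) i

/-- `u(·,t)` has weak spatial gradient `Du(·,t)` on the open set `G`, for a.e. `t ∈ (t₁,t₂)`. -/
def HasWeakSpatialGradient (G : Set (ESp N)) (t₁ t₂ : ℝ)
    (u : ESp N × ℝ → ℝ) (Du : ESp N × ℝ → ESp N) : Prop :=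
  ∀ᵐ t ∂(volume.restrict (Ioo t₁ t₂)),
    ∀ ψ : ESp N → ESp N, ContDiff ℝ (⊤ : ℕ∞) ψ → HasCompactSupport ψ → tsupport ψ ⊆ G →
      ∫ x in G, u (x, t) * sdiv ψ x = - ∫ x in G, (inner ℝ (Du (x, t)) (ψ x) : ℝ)

/-- `t ↦ u(·,t)` is continuous into `L^{q+1}_loc(G)`. -/
def ContIntoLqLoc (G : Set (ESp N)) (t₁ t₂ q : ℝ) (u : ESp N × ℝ → ℝ) : Prop :=
  ∀ K : Set (ESp N), IsCompact K → K ⊆ G → ∀ t₀ ∈ Ioo t₁ t₂,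
    Tendsto (fun t => ∫ x in K, |u (x, t) - u (x, t₀)| ^ (q + 1))
      (nhdsWithin t₀ (Ioo t₁ t₂)) (nhds 0)

/-- `Du ∈ L^p_loc(G × (t₁,t₂])`. -/
def GradLpLoc (G : Set (ESp N)) (t₁ t₂ p : ℝ) (Du : ESp N × ℝ → ESp N) : Prop :=
  ∀ K : Set (ESp N), IsCompact K → K ⊆ G → ∀ a b : ℝ, t₁ < a → b < t₂ →
    IntegrableOn (fun z => ‖Du z‖ ^ p) (K ×ˢ Icc a b) volume

/-- Integrand of the weak formulation: `-u^q ∂_t φ + 𝔸(x,t,u,Du)·Dφ`. -/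
def wkInt (q : ℝ) (𝒜 : ESp N → ℝ → ℝ → ESp N → ESp N)
    (u : ESp N × ℝ → ℝ) (Du : ESp N × ℝ → ESp N) (φ : ESp N × ℝ → ℝ)
    (z : ESp N × ℝ) : ℝ :=
  -(u z ^ q) * deriv (fun s => φ (z.1, s)) z.2
    + (inner ℝ (𝒜 z.1 z.2 (u z) (Du z)) (gradient (fun y => φ (y, z.2)) z.1) : ℝ)

/-- Smooth test function compactly supported in `G × (t₁,t₂)`. -/
def IsTestFn (G : Set (ESp N)) (t₁ t₂ : ℝ) (φ : ESp N × ℝ → ℝ) : Prop :=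
  ContDiff ℝ (⊤ : ℕ∞) φ ∧ HasCompactSupport φ ∧ tsupport φ ⊆ G ×ˢ Ioo t₁ t₂

/-- Non-negative local weak solution of `∂_t(u^q) = div 𝒜(x,t,u,Du)` in `G × (t₁,t₂]`. -/
def IsLocalWeakSolution (G : Set (ESp N)) (t₁ t₂ q p : ℝ)
    (𝒜 : ESp N → ℝ → ℝ → ESp N → ESp N)
    (u : ESp N × ℝ → ℝ) (Du : ESp N × ℝ → ESp N) : Prop :=
  Measurable u ∧ (∀ z, 0 ≤ u z) ∧
  ContIntoLqLoc G t₁ t₂ q u ∧ HasWeakSpatialGradient G t₁ t₂ u Du ∧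
  GradLpLoc G t₁ t₂ p Du ∧
  ∀ φ : ESp N × ℝ → ℝ, IsTestFn G t₁ t₂ φ →
    ∫ z in G ×ˢ Ioo t₁ t₂, wkInt q 𝒜 u Du φ z = 0

/-- Non-negative local weak sub-solution. -/
def IsLocalWeakSubSolution (G : Set (ESp N)) (t₁ t₂ q p : ℝ)
    (𝒜 : ESp N → ℝ → ℝ → ESp N → ESp N)
    (u : ESp N × ℝ → ℝ) (Du : ESp N × ℝ → ESp N) : Prop :=
  Measurable u ∧ (∀ z, 0 ≤ u z) ∧
  ContIntoLqLoc G t₁ t₂ q u ∧ HasWeakSpatialGradient G t₁ t₂ u Du ∧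
  GradLpLoc G t₁ t₂ p Du ∧
  ∀ φ : ESp N × ℝ → ℝ, IsTestFn G t₁ t₂ φ → (∀ z, 0 ≤ φ z) →
    ∫ z in G ×ˢ Ioo t₁ t₂, wkInt q 𝒜 u Du φ z ≤ 0

/-- Non-negative local weak super-solution. -/
def IsLocalWeakSuperSolution (G : Set (ESp N)) (t₁ t₂ q p : ℝ)
    (𝒜 : ESp N → ℝ → ℝ → ESp N → ESp N)
    (u : ESp N × ℝ → ℝ) (Du : ESp N × ℝ → ESp N) : Prop :=
  Measurable u ∧ (∀ z, 0 ≤ u z) ∧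
  ContIntoLqLoc G t₁ t₂ q u ∧ HasWeakSpatialGradient G t₁ t₂ u Du ∧
  GradLpLoc G t₁ t₂ p Du ∧
  ∀ φ : ESp N × ℝ → ℝ, IsTestFn G t₁ t₂ φ → (∀ z, 0 ≤ φ z) →
    0 ≤ ∫ z in G ×ˢ Ioo t₁ t₂, wkInt q 𝒜 u Du φ z

/-- The prototype `p`-Laplacian vector field `|ξ|^{p-2} ξ`. -/
def pLapl (N : ℕ) (p : ℝ) : ESp N → ℝ → ℝ → ESp N → ESp N :=
  fun _ _ _ ξ => ‖ξ‖ ^ (p - 2) • ξ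

/-- Structure conditions with constants `C₀, C₁`. -/
def StructureConds (G : Set (ESp N)) (p C₀ C₁ : ℝ)
    (𝒜 : ESp N → ℝ → ℝ → ESp N → ESp N) : Prop :=
  ∀ᵐ x ∂(volume.restrict G), ∀ t w ξ,
    C₀ * ‖ξ‖ ^ p ≤ (inner ℝ (𝒜 x t w ξ) ξ : ℝ) ∧ ‖𝒜 x t w ξ‖ ≤ C₁ * ‖ξ‖ ^ (p - 1)

/-- The super-critical fast diffusion range `0 < p-1 < q < N(p-1)/(N-p)₊`. -/
def SupercriticalFD (N : ℕ) (p q : ℝ) : Prop :=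
  0 < p - 1 ∧ p - 1 < q ∧ (p < N → q < N * (p - 1) / (N - p))

/-- `u` vanishes continuously on `E`, approaching within `Ω_T = Ω × (0,T]`. -/
def VanishesContOn (Ω : Set (ESp N)) (T : ℝ) (u : ESp N × ℝ → ℝ)
    (E : Set (ESp N × ℝ)) : Prop :=
  ∀ z ∈ E, Tendsto u (nhdsWithin z (Ω ×ˢ Ioc (0:ℝ) T)) (nhds 0)

/-- `ess osc_S u ≤ ω`. -/
def essOscLE (S : Set (ESp N × ℝ)) (u : ESp N × ℝ → ℝ) (ω : ℝ) : Prop :=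
  ∃ m : ℝ, ∀ᵐ z ∂(volume.restrict S), m ≤ u z ∧ u z ≤ m + ω

/-- The last coordinate index, playing the role of `x_N`. -/
def lastIdx (N : ℕ) (hN : 2 ≤ N) : Fin N := ⟨N - 1, by omega⟩

/-- The first `N-1` coordinates of a vector. -/
def firstCoords (N : ℕ) (v : ESp N) : EuclideanSpace ℝ (Fin (N - 1)) :=
  (EuclideanSpace.equiv (Fin (N - 1)) ℝ).symm fun j => v (Fin.castLE (Nat.sub_le N 1) j)

/-- A boundary coordinate system (rigid transformation `A` with `A x₀ = 0`) in which
`∂Ω` is the graph of the Lipschitz function `Φ` and `Ω` the supergraph, inside the cube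
of side `16 r`. -/
def IsGraphChart (N : ℕ) (hN : 2 ≤ N) (Ω : Set (ESp N)) (r L : ℝ) (y : ESp N)
    (A : ESp N ≃ᵃⁱ[ℝ] ESp N) (Φ : EuclideanSpace ℝ (Fin (N - 1)) → ℝ) : Prop :=
  A y = 0 ∧ LipschitzWith (Real.toNNReal L) Φ ∧
  (∀ x : ESp N, (∀ i, |A x i| < 8 * r) →
    (x ∈ Ω ↔ Φ (firstCoords N (A x)) < A x (lastIdx N hN))) ∧
  (∀ x : ESp N, (∀ i, |A x i| < 8 * r) →
    (x ∈ frontier Ω ↔ A x (lastIdx N hN) = Φ (firstCoords N (A x))))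

/-- `Ω` is a Lipschitz domain with constants `r_o, L`. -/
def IsLipschitzDomain (N : ℕ) (hN : 2 ≤ N) (Ω : Set (ESp N)) (r L : ℝ) : Prop :=
  0 < r ∧ 0 < L ∧ ∀ y ∈ frontier Ω, ∃ A Φ, IsGraphChart N hN Ω r L y A Φ

/-- Uniform two-sided ball condition with radius `r` (the `C^{1,1}` character of `∂Ω`). -/
def TwoSidedBall (Ω : Set (ESp N)) (r : ℝ) : Prop :=
  0 < r ∧ ∀ x ∈ frontier Ω, ∃ ce ci : ESp N,
    ball ce r ∩ Ω = ∅ ∧ ball ci r ⊆ Ω ∧ dist x ce = r ∧ dist x ci = r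

/-- Positive geometric density of `∂Ω` with constants `β, R`. -/
def PosGeomDensity (Ω : Set (ESp N)) (β R : ℝ) : Prop :=
  ∀ y ∈ frontier Ω, ∀ ρ : ℝ, 0 < ρ → ρ ≤ R →
    ENNReal.ofReal β * volume (ball y ρ) ≤ volume (ball y ρ ∩ Ωᶜ)


/-- `𝔤₊(w,k) = q ∫_k^w |s|^{q-1}(s-k)₊ ds`. -/
def gplus (q w k : ℝ) : ℝ := q * ∫ s in k..w, |s| ^ (q - 1) * max (s - k) 0

/-- `𝔤₋(w,k) = -q ∫_k^w |s|^{q-1}(s-k)₋ ds`. -/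
def gminus (q w k : ℝ) : ℝ := -q * ∫ s in k..w, |s| ^ (q - 1) * max (k - s) 0

namespace GB
open intervalIntegral


def Fp (q s : ℝ) : ℝ := s * |s| ^ (q - 1)

lemma Fp_of_nonneg {q : ℝ} (hq : 0 < q) {s : ℝ} (hs : 0 ≤ s) : Fp q s = s ^ q := by
  rcases hs.eq_or_lt with h | h
  · simp [Fp, ← h, Real.zero_rpow hq.ne']
  · rw [Fp, abs_of_pos h, mul_comm, ← Real.rpow_add_one h.ne']; norm_num

lemma Fp_of_nonpos {q : ℝ} (hq : 0 < q) {s : ℝ} (hs : s ≤ 0) : Fp q s = -(-s) ^ q := by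
  have h := Fp_of_nonneg hq (neg_nonneg.2 hs)
  rw [Fp, abs_neg] at h
  rw [Fp]
  nlinarith [h]

lemma Fp_neg (q s : ℝ) : Fp q (-s) = - Fp q s := by simp [Fp]

lemma Fp_cont {q : ℝ} (hq : 0 < q) : Continuous (Fp q) := by
  rw [continuous_iff_continuousAt]
  intro x
  rcases eq_or_ne x 0 with rfl | hx
  · have h1 : Continuous fun s : ℝ => |s| ^ q :=
      continuous_abs.rpow_const (fun x => Or.inr hq.le)
    have h2 : Tendsto (fun s : ℝ => |s| ^ q) (nhds 0) (nhds 0) := by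
      simpa [Real.zero_rpow hq.ne'] using h1.tendsto 0
    have h3 : Tendsto (Fp q) (nhds 0) (nhds 0) := by
      apply squeeze_zero_norm _ h2
      intro s
      rcases eq_or_ne s 0 with rfl | hs
      · simp [Fp, Real.zero_rpow hq.ne']
      · have he : |s| ^ q = |s| * |s| ^ (q - 1) := by
          rw [mul_comm, ← Real.rpow_add_one (abs_ne_zero.2 hs)]; norm_num
        simp only [Fp, Real.norm_eq_abs, abs_mul, abs_abs]
        rw [abs_of_nonneg (Real.rpow_nonneg (abs_nonneg s) _), he]
    have : Fp q 0 = 0 := by simp [Fp]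
    simpa [ContinuousAt, this] using h3
  · exact (continuousAt_id.mul ((continuous_abs.continuousAt).rpow_const
      (Or.inl (abs_ne_zero.2 hx))))

lemma Fp_mono {q : ℝ} (hq : 0 < q) : Monotone (Fp q) := by
  intro x y hxy
  rcases le_total 0 x with hx | hx
  · rw [Fp_of_nonneg hq hx, Fp_of_nonneg hq (hx.trans hxy)]
    exact Real.rpow_le_rpow hx hxy hq.le
  · rcases le_total y 0 with hy | hy
    · rw [Fp_of_nonpos hq hx, Fp_of_nonpos hq hy]
      have := Real.rpow_le_rpow (neg_nonneg.2 hy) (neg_le_neg hxy) hq.le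
      linarith
    · rw [Fp_of_nonpos hq hx, Fp_of_nonneg hq hy]
      have h1 : (0:ℝ) ≤ (-x) ^ q := Real.rpow_nonneg (neg_nonneg.2 hx) q
      have h2 : (0:ℝ) ≤ y ^ q := Real.rpow_nonneg hy q
      linarith

lemma self_mul_Fp {q : ℝ} (hq : 0 < q) (s : ℝ) : s * Fp q s = |s| ^ (q + 1) := by
  rcases eq_or_ne s 0 with rfl | hs
  · simp [Fp, Real.zero_rpow (by positivity : q + 1 ≠ 0)]
  · have : s * s = |s| * |s| := by rcases abs_cases s with ⟨h, _⟩ | ⟨h, _⟩ <;> nlinarith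
    rw [Fp, ← mul_assoc, this, mul_assoc, mul_comm (|s|) (|s| ^ (q-1)),
      ← Real.rpow_add_one (abs_ne_zero.2 hs), mul_comm,
      ← Real.rpow_add_one (abs_ne_zero.2 hs)]
    norm_num

lemma abs_rpow_II {r : ℝ} (hr : -1 < r) (a b : ℝ) :
    IntervalIntegrable (fun s => |s| ^ r) volume a b := by
  have key : ∀ c : ℝ, 0 ≤ c → IntervalIntegrable (fun s => |s| ^ r) volume 0 c := by
    intro c hc
    rw [intervalIntegrable_iff_integrableOn_Ioc_of_le hc]
    refine IntegrableOn.congr_fun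
      ((intervalIntegrable_iff_integrableOn_Ioc_of_le hc).1 (intervalIntegrable_rpow' hr))
      (fun s hs => ?_) measurableSet_Ioc
    rw [abs_of_pos hs.1]
  have keyneg : ∀ c : ℝ, c ≤ 0 → IntervalIntegrable (fun s => |s| ^ r) volume c 0 := by
    intro c hc
    have h := (key (-c) (by linarith)).symm
    have := (IntervalIntegrable.iff_comp_neg (f := fun s => |s| ^ r) (a := -c) (b := 0)).1 h
    simpa using this
  have h1 : IntervalIntegrable (fun s => |s| ^ r) volume a 0 := by
    rcases le_total a 0 with h | h
    · exact keyneg a h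
    · exact (key a h).symm
  have h2 : IntervalIntegrable (fun s => |s| ^ r) volume 0 b := by
    rcases le_total 0 b with h | h
    · exact key b h
    · exact (keyneg b h).symm
  exact h1.trans h2

lemma myFTC {h H : ℝ → ℝ} (Hcont : Continuous H)
    (Hd : ∀ s : ℝ, s ≠ 0 → HasDerivAt H (h s) s)
    (hint : ∀ u v : ℝ, IntervalIntegrable h volume u v) (a b : ℝ) :
    ∫ s in a..b, h s = H b - H a := by
  have base : ∀ u v : ℝ, u ≤ v → (0 ∉ Ioo u v) → ∫ s in u..v, h s = H v - H u := by
    intro u v huv h0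
    refine integral_eq_sub_of_hasDeriv_right_of_le huv Hcont.continuousOn
      (fun x hx => (Hd x ?_).hasDerivWithinAt) (hint u v)
    rintro rfl; exact h0 hx
  have main : ∀ u v : ℝ, u ≤ v → ∫ s in u..v, h s = H v - H u := by
    intro u v huv
    rcases le_or_gt 0 u with hu | hu
    · exact base u v huv (fun hx => absurd hx.1 (by linarith [hx.1]))
    · rcases le_or_gt v 0 with hv | hv
      · exact base u v huv (fun hx => absurd hx.2 (by linarith [hx.2]))
      · have e1 := base u 0 hu.le (fun hx => lt_irrefl 0 hx.2)
        have e2 := base 0 v hv.le (fun hx => lt_irrefl 0 hx.1)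
        rw [← integral_add_adjacent_intervals (hint u 0) (hint 0 v), e1, e2]
        ring
  rcases le_total a b with hab | hab
  · exact main a b hab
  · rw [integral_symm, main b a hab]; ring

lemma hasDerivAt_abs_rpow {q : ℝ} (hq : 0 < q) {s : ℝ} (hs : s ≠ 0) :
    HasDerivAt (fun x : ℝ => |x| ^ (q + 1)) ((q + 1) * Fp q s) s := by
  rcases hs.lt_or_gt with h | h
  · have hd : HasDerivAt (fun x : ℝ => (-x) ^ (q + 1)) ((q+1) * Fp q s) s := by
      have h1 : HasDerivAt (fun x : ℝ => (-x) ^ (q + 1))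
          ((q + 1) * (-s) ^ (q + 1 - 1) * (-1)) s :=
        (Real.hasDerivAt_rpow_const (p := q + 1) (Or.inl (by linarith))).comp s (hasDerivAt_neg s)
      convert h1 using 1
      rw [Fp_of_nonpos hq h.le]
      have : q + 1 - 1 = q := by ring
      rw [this]; ring
    apply hd.congr_of_eventuallyEq
    filter_upwards [isOpen_Iio.eventually_mem (show s ∈ Iio (0:ℝ) from h)] with x hx
    rw [abs_of_neg hx]
  · have hd : HasDerivAt (fun x : ℝ => x ^ (q + 1)) ((q+1) * Fp q s) s := by
      have h1 : HasDerivAt (fun x : ℝ => x ^ (q + 1)) ((q + 1) * s ^ (q + 1 - 1)) s :=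
        Real.hasDerivAt_rpow_const (Or.inl h.ne')
      convert h1 using 1
      rw [Fp_of_nonneg hq h.le]
      have : q + 1 - 1 = q := by ring
      rw [this]
    apply hd.congr_of_eventuallyEq
    filter_upwards [isOpen_Ioi.eventually_mem (show s ∈ Ioi (0:ℝ) from h)] with x hx
    rw [abs_of_pos hx]

lemma hasDerivAt_Fp {q : ℝ} (hq : 0 < q) {s : ℝ} (hs : s ≠ 0) :
    HasDerivAt (Fp q) (q * |s| ^ (q - 1)) s := by
  rcases hs.lt_or_gt with h | h
  · have hd : HasDerivAt (fun x : ℝ => -((-x) ^ q)) (q * |s| ^ (q - 1)) s := by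
      have h1 : HasDerivAt (fun x : ℝ => (-x) ^ q) (q * (-s) ^ (q - 1) * (-1)) s :=
        (Real.hasDerivAt_rpow_const (p := q) (Or.inl (by linarith))).comp s (hasDerivAt_neg s)
      have h2 := h1.neg
      exact h2.congr_deriv (by rw [abs_of_neg h]; ring)
    apply hd.congr_of_eventuallyEq
    filter_upwards [isOpen_Iio.eventually_mem (show s ∈ Iio (0:ℝ) from h)] with x hx
    rw [Fp_of_nonpos hq hx.le]
  · have hd : HasDerivAt (fun x : ℝ => x ^ q) (q * |s| ^ (q - 1)) s := by
      have h1 : HasDerivAt (fun x : ℝ => x ^ q) (q * s ^ (q - 1)) s :=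
        Real.hasDerivAt_rpow_const (Or.inl h.ne')
      convert h1 using 2
      rw [abs_of_pos h]
    apply hd.congr_of_eventuallyEq
    filter_upwards [isOpen_Ioi.eventually_mem (show s ∈ Ioi (0:ℝ) from h)] with x hx
    rw [Fp_of_nonneg hq hx.le]



def Cq (q : ℝ) : ℝ := 2 ^ (q + 1) / q + 2 ^ (q + 1) + 4 * (q + 1)

lemma Cq_pos {q : ℝ} (hq : 0 < q) : 0 < Cq q := by
  have h1 : (0:ℝ) < 2 ^ (q + 1) := Real.rpow_pos_of_pos two_pos _
  have : (0:ℝ) < 2 ^ (q+1) / q := by positivity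
  unfold Cq; nlinarith

lemma one_le_Cq {q : ℝ} (hq : 0 < q) : 1 ≤ Cq q := by
  have h1 : (0:ℝ) < 2 ^ (q + 1) := Real.rpow_pos_of_pos two_pos _
  have : (0:ℝ) < 2 ^ (q+1) / q := by positivity
  unfold Cq; nlinarith

set_option maxHeartbeats 2000000 in
lemma incrA {q : ℝ} (hq : 0 < q) {y x : ℝ} (h0 : 0 ≤ y) (hyx : y ≤ x) :
    (Cq q)⁻¹ * ((x + y) ^ (q - 1) * (x - y)) ≤ x ^ q - y ^ q ∧
      x ^ q - y ^ q ≤ Cq q * ((x + y) ^ (q - 1) * (x - y)) := by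
  have hCpos := Cq_pos hq
  rcases hyx.eq_or_lt with rfl | hlt
  · simp
  have hx : 0 < x := lt_of_le_of_lt h0 hlt
  set M := x + y with hM
  have hMpos : 0 < M := by positivity
  set m := M / 2 with hm
  have hmpos : 0 < m := by positivity
  have hym : y ≤ m := by rw [hm, hM]; linarith
  have hmx : m ≤ x := by rw [hm, hM]; linarith
  have hδ : 0 < x - y := by linarith
  have hMq : (0:ℝ) < M ^ (q - 1) := Real.rpow_pos_of_pos hMpos _
  have h2q : (0:ℝ) < 2 ^ q := Real.rpow_pos_of_pos two_pos _
  have h2q1 : (1:ℝ) ≤ 2 ^ q := Real.one_le_rpow one_le_two hq.le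
  have hInt : ∀ u v : ℝ, q * ∫ s in u..v, s ^ (q - 1) = v ^ q - u ^ q := by
    intro u v
    rw [integral_rpow (Or.inl (by linarith : (-1:ℝ) < q - 1))]
    have h : q - 1 + 1 = q := by ring
    rw [h]; field_simp
  have hmq : m ^ (q - 1) = 2 * M ^ (q - 1) / 2 ^ q := by
    rw [hm, Real.div_rpow hMpos.le (by norm_num : (0:ℝ) ≤ 2),
      Real.rpow_sub two_pos q 1, Real.rpow_one]
    field_simp
  have hxm : x - m = (x - y) / 2 := by rw [hm, hM]; ring
  have hII : ∀ u v : ℝ, IntervalIntegrable (fun s => s ^ (q-1)) MeasureTheory.volume u v :=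
    fun u v => intervalIntegrable_rpow' (by linarith)
  constructor
  · -- lower bound
    have hyq : y ^ q ≤ m ^ q := Real.rpow_le_rpow h0 hym hq.le
    -- x^q - m^q ≥ q * K * (x - m)
    have key : ∀ K : ℝ, (∀ s ∈ Set.Icc m x, K ≤ s ^ (q - 1)) →
        q * (K * (x - m)) ≤ x ^ q - m ^ q := by
      intro K hK
      rw [← hInt m x]
      have h1 : K * (x - m) = ∫ _ in m..x, K := by
        rw [_root_.intervalIntegral.integral_const, smul_eq_mul]; ring
      rw [h1]
      have := integral_mono_on hmx
        (intervalIntegrable_const) (hII m x) hK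
      nlinarith
    rcases le_total 1 q with hq1 | hq1
    · have hlow := key (m ^ (q-1)) (fun s hs => Real.rpow_le_rpow hmpos.le hs.1 (by linarith))
      have hCq : 2 ^ q / q ≤ Cq q := by
        have h1 : (2:ℝ) ^ q ≤ 2 ^ (q+1) := Real.rpow_le_rpow_of_exponent_le one_le_two (by linarith)
        have h2 : (0:ℝ) < 2 ^ (q+1) := Real.rpow_pos_of_pos two_pos _
        have h3 : (2:ℝ) ^ q / q ≤ 2 ^ (q+1) / q := by
          exact (div_le_div_iff_of_pos_right hq).2 h1
        unfold Cq; nlinarith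
      have hinv : (Cq q)⁻¹ ≤ q / 2 ^ q := by
        have := inv_anti₀ (by positivity : (0:ℝ) < 2 ^ q / q) hCq
        rwa [inv_div] at this
      have hfin : (q / 2 ^ q) * (M ^ (q-1) * (x - y)) ≤ x ^ q - y ^ q := by
        rw [hmq, hxm] at hlow
        have e : q * (2 * M ^ (q-1) / 2 ^ q * ((x - y) / 2)) = (q / 2 ^ q) * (M ^ (q-1) * (x-y)) := by
          field_simp
        nlinarith
      have : (Cq q)⁻¹ * (M ^ (q-1) * (x - y)) ≤ (q / 2 ^ q) * (M ^ (q-1) * (x - y)) := by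
        apply mul_le_mul_of_nonneg_right hinv (by positivity)
      linarith
    · have hxq1 : M ^ (q - 1) ≤ x ^ (q-1) :=
        Real.rpow_le_rpow_of_nonpos hx (by rw [hM]; linarith) (by linarith)
      have hlow := key (x ^ (q-1)) (fun s hs =>
        Real.rpow_le_rpow_of_nonpos (lt_of_lt_of_le hmpos hs.1) hs.2 (by linarith))
      have hCq : 2 / q ≤ Cq q := by
        have h1 : (2:ℝ) ≤ 2 ^ (q+1) := by
          nth_rewrite 1 [← Real.rpow_one 2]
          exact Real.rpow_le_rpow_of_exponent_le one_le_two (by linarith)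
        have h3 : (2:ℝ) / q ≤ 2 ^ (q+1) / q := (div_le_div_iff_of_pos_right hq).2 h1
        have h2 : (0:ℝ) < 2 ^ (q+1) := Real.rpow_pos_of_pos two_pos _
        unfold Cq; nlinarith
      have hinv : (Cq q)⁻¹ ≤ q / 2 := by
        have := inv_anti₀ (by positivity : (0:ℝ) < 2 / q) hCq
        rwa [inv_div] at this
      have hfin : (q / 2) * (M ^ (q-1) * (x - y)) ≤ x ^ q - y ^ q := by
        rw [hxm] at hlow
        have h8 : (q/2) * (M^(q-1)*(x-y)) ≤ (q/2) * (x^(q-1)*(x-y)) :=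
          mul_le_mul_of_nonneg_left (mul_le_mul_of_nonneg_right hxq1 hδ.le) (by positivity)
        have e : q * (x^(q-1) * ((x-y)/2)) = (q/2)*(x^(q-1)*(x-y)) := by ring
        linarith
      have : (Cq q)⁻¹ * (M ^ (q-1) * (x - y)) ≤ (q / 2) * (M ^ (q-1) * (x - y)) := by
        apply mul_le_mul_of_nonneg_right hinv (by positivity)
      linarith
  · -- upper bound
    have key : ∀ K : ℝ, (∀ s ∈ Set.Icc y x, s ^ (q - 1) ≤ K) →
        x ^ q - y ^ q ≤ q * (K * (x - y)) := by
      intro K hK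
      rw [← hInt y x]
      have h1 : K * (x - y) = ∫ _ in y..x, K := by
        rw [_root_.intervalIntegral.integral_const, smul_eq_mul]; ring
      rw [h1]
      have := integral_mono_on hyx (hII y x) (intervalIntegrable_const) hK
      nlinarith
    have hq4 : q ≤ Cq q := by
      have h1 : (0:ℝ) < 2 ^ (q+1) := Real.rpow_pos_of_pos two_pos _
      have : (0:ℝ) < 2 ^ (q+1) / q := by positivity
      unfold Cq; nlinarith
    rcases le_total 1 q with hq1 | hq1
    · have hup := key (M ^ (q-1)) (fun s hs =>
        Real.rpow_le_rpow (le_trans h0 hs.1) (by rw [hM]; linarith [hs.2]) (by linarith))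
      have h9 : q * (M ^ (q-1) * (x - y)) ≤ Cq q * (M ^ (q-1) * (x - y)) :=
        mul_le_mul_of_nonneg_right hq4 (by positivity)
      linarith
    · rcases le_total y (x/2) with hy2 | hy2
      · have hx2 : x ≤ 2 * (x - y) := by linarith
        have hxq : x ^ (q-1) * x = x ^ q := by
          rw [← Real.rpow_add_one hx.ne' (q-1)]; norm_num
        have hxM : x ^ (q-1) ≤ 2 * M ^ (q-1) / 2 ^ q := by
          rw [← hmq]
          exact Real.rpow_le_rpow_of_nonpos hmpos (by rw [hm, hM]; linarith) (by linarith)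
        have hyq : (0:ℝ) ≤ y ^ q := Real.rpow_nonneg h0 q
        have hxq' : x ^ q ≤ 4 * (M ^ (q-1) * (x - y)) := by
          have h1 : x ^ q ≤ (2 * M ^ (q-1) / 2 ^ q) * x := by
            rw [← hxq]; exact mul_le_mul_of_nonneg_right hxM hx.le
          have h2 : (2 * M ^ (q-1) / 2 ^ q) * x ≤ (2 * M ^ (q-1) / 2 ^ q) * (2 * (x - y)) := by
            apply mul_le_mul_of_nonneg_left hx2 (by positivity)
          have h3 : (2 * M ^ (q-1) / 2 ^ q) * (2 * (x - y)) ≤ 4 * (M ^ (q-1) * (x - y)) := by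
            rw [div_mul_eq_mul_div, div_le_iff₀ h2q]
            have h4 : 4*(M^(q-1)*(x-y)) * 1 ≤ 4*(M^(q-1)*(x-y)) * 2^q :=
              mul_le_mul_of_nonneg_left h2q1 (by positivity)
            nlinarith [h4]
          linarith
        have h4C : (4:ℝ) ≤ Cq q := by
          have h1 : (0:ℝ) < 2 ^ (q+1) := Real.rpow_pos_of_pos two_pos _
          have : (0:ℝ) < 2 ^ (q+1) / q := by positivity
          unfold Cq; nlinarith
        have : (4:ℝ) * (M ^ (q-1) * (x-y)) ≤ Cq q * (M ^ (q-1) * (x-y)) :=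
          mul_le_mul_of_nonneg_right h4C (by positivity)
        linarith
      · have hypos : 0 < y := by linarith
        have hyM : y ^ (q - 1) ≤ 4 * M ^ (q-1) := by
          have h1 : M / 4 ≤ y := by rw [hM]; linarith
          have h2 : y ^ (q-1) ≤ (M/4) ^ (q-1) :=
            Real.rpow_le_rpow_of_nonpos (by positivity) h1 (by linarith)
          have h3 : (M/4) ^ (q-1) = M ^ (q-1) * 4 / 4 ^ q := by
            rw [Real.div_rpow hMpos.le (by norm_num : (0:ℝ) ≤ 4),
              Real.rpow_sub (by norm_num : (0:ℝ) < 4) q 1, Real.rpow_one]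
            field_simp
          have h4q : (1:ℝ) ≤ 4 ^ q := Real.one_le_rpow (by norm_num) hq.le
          have h4qpos : (0:ℝ) < 4 ^ q := by linarith
          rw [h3] at h2
          calc y ^ (q-1) ≤ M ^ (q-1) * 4 / 4 ^ q := h2
            _ ≤ 4 * M ^ (q-1) := by rw [div_le_iff₀ h4qpos]; nlinarith
        have hup := key (y ^ (q-1)) (fun s hs =>
          Real.rpow_le_rpow_of_nonpos hypos hs.1 (by linarith))
        have hq4' : 4 * q ≤ Cq q := by
          have h1 : (0:ℝ) < 2 ^ (q+1) := Real.rpow_pos_of_pos two_pos _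
          have : (0:ℝ) < 2 ^ (q+1) / q := by positivity
          unfold Cq; nlinarith
        have h5 : q * (y ^ (q-1) * (x - y)) ≤ q * ((4 * M ^ (q-1)) * (x - y)) := by
          apply mul_le_mul_of_nonneg_left (mul_le_mul_of_nonneg_right hyM hδ.le) hq.le
        have h6 : q * ((4 * M ^ (q-1)) * (x - y)) = (4*q) * (M ^ (q-1) * (x-y)) := by ring
        have h7 : (4*q) * (M ^ (q-1) * (x-y)) ≤ Cq q * (M ^ (q-1) * (x-y)) :=
          mul_le_mul_of_nonneg_right hq4' (by positivity)
        linarith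


lemma two_rpow_le_Cq {q : ℝ} (hq : 0 < q) : (2:ℝ) ^ q ≤ Cq q := by
  have h1 : (2:ℝ) ^ q ≤ 2 ^ (q+1) := Real.rpow_le_rpow_of_exponent_le one_le_two (by linarith)
  have h2 : (0:ℝ) < 2 ^ (q+1) / q := by positivity
  unfold Cq; nlinarith

lemma two_le_Cq {q : ℝ} (hq : 0 < q) : (2:ℝ) ≤ Cq q := by
  have h2 : (0:ℝ) < 2 ^ (q+1) / q := by positivity
  have h1 : (0:ℝ) < 2 ^ (q + 1) := Real.rpow_pos_of_pos two_pos _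
  unfold Cq; nlinarith

lemma incr {q : ℝ} (hq : 0 < q) {y x : ℝ} (hyx : y ≤ x) :
    (Cq q)⁻¹ * ((|x| + |y|) ^ (q - 1) * (x - y)) ≤ Fp q x - Fp q y ∧
      Fp q x - Fp q y ≤ Cq q * ((|x| + |y|) ^ (q - 1) * (x - y)) := by
  have hCpos := Cq_pos hq
  rcases le_or_gt 0 y with hy | hy
  · have hx : 0 ≤ x := le_trans hy hyx
    rw [Fp_of_nonneg hq hx, Fp_of_nonneg hq hy, abs_of_nonneg hx, abs_of_nonneg hy]
    exact incrA hq hy hyx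
  · rcases le_or_gt x 0 with hx | hx
    · rw [Fp_of_nonpos hq hx, Fp_of_nonpos hq hy.le, abs_of_nonpos hx, abs_of_nonpos hy.le]
      obtain ⟨h1, h2⟩ := incrA hq (y := -x) (x := -y) (by linarith) (by linarith)
      rw [show (-y) + (-x) = -x + -y from by ring, show (-y) - (-x) = x - y from by ring] at h1 h2
      exact ⟨by linarith, by linarith⟩
    · rw [Fp_of_nonneg hq hx.le, Fp_of_nonpos hq hy.le, abs_of_pos hx, abs_of_neg hy]
      set Y := -y with hY
      have hYpos : 0 < Y := by rw [hY]; linarith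
      set M := x + Y with hM
      have hMpos : 0 < M := by positivity
      have hxyM : x - y = M := by rw [hM, hY]; ring
      have hMq : (x + Y) ^ (q - 1) * (x - y) = M ^ q := by
        rw [hxyM, ← hM, ← Real.rpow_add_one hMpos.ne' (q-1)]; norm_num
      rw [hMq]
      have hxM : x ^ q ≤ M ^ q := Real.rpow_le_rpow hx.le (by rw [hM]; linarith) hq.le
      have hYM : Y ^ q ≤ M ^ q := Real.rpow_le_rpow hYpos.le (by rw [hM]; linarith) hq.le
      have hMqpos : (0:ℝ) < M ^ q := Real.rpow_pos_of_pos hMpos _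
      have hxq : (0:ℝ) ≤ x ^ q := Real.rpow_nonneg hx.le _
      have hYq : (0:ℝ) ≤ Y ^ q := Real.rpow_nonneg hYpos.le _
      have h2q : (0:ℝ) < 2 ^ q := Real.rpow_pos_of_pos two_pos _
      constructor
      · -- lower : (Cq q)⁻¹ * M^q ≤ x^q + Y^q
        have hhalf : M ^ q / 2 ^ q ≤ x ^ q + Y ^ q := by
          have e : (M/2) ^ q = M ^ q / 2 ^ q :=
            Real.div_rpow hMpos.le (by norm_num) q
          rcases le_total x Y with hc | hc
          · have : (M/2) ^ q ≤ Y ^ q :=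
              Real.rpow_le_rpow (by positivity) (by rw [hM]; linarith) hq.le
            rw [e] at this; linarith
          · have : (M/2) ^ q ≤ x ^ q :=
              Real.rpow_le_rpow (by positivity) (by rw [hM]; linarith) hq.le
            rw [e] at this; linarith
        have hinv : (Cq q)⁻¹ ≤ (2 ^ q)⁻¹ := inv_anti₀ h2q (two_rpow_le_Cq hq)
        have : (Cq q)⁻¹ * M ^ q ≤ (2^q)⁻¹ * M ^ q :=
          mul_le_mul_of_nonneg_right hinv hMqpos.le
        have e2 : (2^q:ℝ)⁻¹ * M ^ q = M ^ q / 2 ^ q := by ring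
        linarith
      · have h2C := two_le_Cq hq
        nlinarith



lemma gplus_eq_zero {q : ℝ} (hq : 0 < q) {a b : ℝ} (h : a ≤ b) : gplus q a b = 0 := by
  have e : Set.EqOn (fun s => |s|^(q-1) * max (s-b) 0) (fun _ => (0:ℝ)) (Set.uIcc b a) := by
    intro s hs
    rw [Set.uIcc_of_ge h] at hs
    simp [max_eq_right (by linarith [hs.2] : s - b ≤ 0)]
  rw [gplus, _root_.intervalIntegral.integral_congr e]
  simp

lemma gplus_repr {q : ℝ} (hq : 0 < q) {a b : ℝ} (hba : b ≤ a) :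
    gplus q a b = (a - b) * Fp q a - ∫ s in b..a, Fp q s := by
  have hIIabs : ∀ u v : ℝ, IntervalIntegrable (fun s => |s| ^ (q-1)) volume u v :=
    abs_rpow_II (by linarith)
  have hIIF : ∀ u v : ℝ, IntervalIntegrable (Fp q) volume u v :=
    fun u v => (Fp_cont hq).intervalIntegrable u v
  have hIIh : ∀ u v : ℝ, IntervalIntegrable
      (fun s => q * (Fp q s - b * |s| ^ (q-1))) volume u v :=
    fun u v => (((hIIF u v).sub ((hIIabs u v).const_mul b)).const_mul q)
  -- step 1 : rewrite the integrand
  have e1 : gplus q a b = ∫ s in b..a, q * (Fp q s - b * |s| ^ (q-1)) := by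
    have e : Set.EqOn (fun s => |s|^(q-1) * max (s-b) 0)
        (fun s => Fp q s - b * |s| ^ (q-1)) (Set.uIcc b a) := by
      intro s hs
      rw [Set.uIcc_of_le hba] at hs
      simp only [Fp]
      rw [max_eq_left (by linarith [hs.1] : (0:ℝ) ≤ s - b)]
      ring
    rw [gplus, _root_.intervalIntegral.integral_congr e,
      _root_.intervalIntegral.integral_const_mul]
  -- step 2 : FTC for the integrand
  have e2 : ∫ s in b..a, q * (Fp q s - b * |s| ^ (q-1))
      = (q/(q+1) * |a|^(q+1) - b * Fp q a) - (q/(q+1) * |b|^(q+1) - b * Fp q b) := by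
    apply myFTC (H := fun s => q/(q+1) * |s|^(q+1) - b * Fp q s)
    · exact (continuous_const.mul
        (continuous_abs.rpow_const (fun x => Or.inr (by linarith : (0:ℝ) ≤ q + 1)))).sub
        (continuous_const.mul (Fp_cont hq))
    · intro s hs
      have h1 := (hasDerivAt_abs_rpow hq hs).const_mul (q/(q+1))
      have h2 := (hasDerivAt_Fp hq hs).const_mul b
      have h3 := h1.sub h2
      have : q + 1 ≠ 0 := by linarith
      exact h3.congr_deriv (by
        rw [div_mul_eq_mul_div, mul_div_assoc, mul_div_cancel_left₀ _ this]; ring)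
    · exact hIIh
  -- step 3 : FTC for Fp
  have e3 : ∫ s in b..a, Fp q s = |a|^(q+1)/(q+1) - |b|^(q+1)/(q+1) := by
    apply myFTC (H := fun s => |s|^(q+1)/(q+1))
    · exact (continuous_abs.rpow_const (fun x => Or.inr (by linarith))).div_const _
    · intro s hs
      have h1 := (hasDerivAt_abs_rpow hq hs).div_const (q+1)
      exact h1.congr_deriv (mul_div_cancel_left₀ _ (by linarith : q + 1 ≠ 0))
    · exact hIIF
  rw [e1, e2, e3]
  have ha : a * Fp q a = |a|^(q+1) := self_mul_Fp hq a
  have hb : b * Fp q b = |b|^(q+1) := self_mul_Fp hq b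
  have hq1 : q + 1 ≠ 0 := by linarith
  field_simp
  nlinarith [ha, hb]


lemma gplus_bound {q : ℝ} (hq : 0 < q) (a b : ℝ) :
    (4 * Cq q * 2 ^ |q-1|)⁻¹ * ((|a| + |b|) ^ (q - 1) * (max (a - b) 0) ^ 2) ≤ gplus q a b ∧
      gplus q a b ≤ (4 * Cq q * 2 ^ |q-1|) * ((|a| + |b|) ^ (q - 1) * (max (a - b) 0) ^ 2) := by
  have hCpos := Cq_pos hq
  have hE : (0:ℝ) < 2 ^ |q-1| := Real.rpow_pos_of_pos two_pos _
  have hE1 : (1:ℝ) ≤ 2 ^ |q-1| := Real.one_le_rpow one_le_two (abs_nonneg _)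
  have hγpos : (0:ℝ) < 4 * Cq q * 2 ^ |q-1| := by positivity
  rcases le_or_gt a b with hab | hab
  · rw [gplus_eq_zero hq hab, max_eq_right (by linarith : a - b ≤ 0)]
    simp
  · have hδ : 0 < a - b := by linarith
    rw [max_eq_left hδ.le]
    have hMpos : 0 < |a| + |b| := by
      have h1 : 0 ≤ |a| := abs_nonneg a
      have h2 : 0 ≤ |b| := abs_nonneg b
      rcases eq_or_lt_of_le (add_nonneg h1 h2) with h | h
      · exfalso
        have ha0 : a = 0 := abs_eq_zero.1 (by linarith)
        have hb0 : b = 0 := abs_eq_zero.1 (by linarith)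
        rw [ha0, hb0] at hδ; linarith
      · exact h
    set m := (a+b)/2 with hm
    have hma : m ≤ a := by rw [hm]; linarith
    have hbm : b ≤ m := by rw [hm]; linarith
    have repr := gplus_repr hq hab.le
    have hIIF : ∀ u v : ℝ, IntervalIntegrable (Fp q) volume u v :=
      fun u v => (Fp_cont hq).intervalIntegrable u v
    constructor
    · -- LOWER BOUND
      have hsplit := _root_.intervalIntegral.integral_add_adjacent_intervals
        (hIIF b m) (hIIF m a)
      have h4 : ∫ s in m..a, Fp q s ≤ (a - m) * Fp q a := by
        have := _root_.intervalIntegral.integral_mono_on hma (hIIF m a)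
          intervalIntegrable_const (fun s hs => Fp_mono hq hs.2)
        rw [_root_.intervalIntegral.integral_const, smul_eq_mul] at this
        linarith
      have h5 : ∫ s in b..m, Fp q s ≤ (m - b) * Fp q m := by
        have := _root_.intervalIntegral.integral_mono_on hbm (hIIF b m)
          intervalIntegrable_const (fun s hs => Fp_mono hq hs.2)
        rw [_root_.intervalIntegral.integral_const, smul_eq_mul] at this
        linarith
      have ham : a - m = (a-b)/2 := by rw [hm]; ring
      have hmb : m - b = (a-b)/2 := by rw [hm]; ring
      have h6 : (a-b)/2 * (Fp q a - Fp q m) ≤ gplus q a b := by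
        rw [repr, ← hsplit]
        rw [ham] at h4
        rw [hmb] at h5
        nlinarith [h4, h5]
      have h7 := (incr hq hma).1
      have hfin1 : (a-b)/2 * ((Cq q)⁻¹ * ((|a|+|m|)^(q-1) * (a - m)))
          ≤ (a-b)/2 * (Fp q a - Fp q m) :=
        mul_le_mul_of_nonneg_left h7 (by linarith)
      -- |a| + |m| comparison with M
      have habsm : |m| = |a+b|/2 := by
        rw [hm, abs_div]; norm_num
      have l1 : |b| ≤ |a + b| + |a| := by
        have h := abs_add_le (a+b) (-a)
        have e : a + b + -a = b := by ring
        rw [e, abs_neg] at h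
        exact h
      have l2 : |a + b| ≤ |a| + |b| := abs_add_le a b
      have habsa : |a| ≤ |a| + |b| := by linarith [abs_nonneg b]
      have hu1 : (|a| + |b|)/2 ≤ |a| + |m| := by rw [habsm]; linarith
      have hu2 : |a| + |m| ≤ 2*(|a| + |b|) := by rw [habsm]; linarith
      have hupos : 0 < |a| + |m| := lt_of_lt_of_le (by linarith) hu1
      have mid : (|a| + |b|) ^ (q-1) ≤ 2^|q-1| * (|a| + |m|)^(q-1) := by
        rcases le_total 1 q with hq1 | hq1
        · rw [abs_of_nonneg (by linarith : (0:ℝ) ≤ q - 1)]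
          have h8 : ((|a| + |b|)/2)^(q-1) ≤ (|a| + |m|)^(q-1) :=
            Real.rpow_le_rpow (by positivity) hu1 (by linarith)
          have h9 : ((|a| + |b|)/2)^(q-1) = (|a| + |b|)^(q-1)/2^(q-1) :=
            Real.div_rpow hMpos.le (by norm_num) _
          have h10 : (0:ℝ) < 2^(q-1) := Real.rpow_pos_of_pos two_pos _
          rw [h9] at h8
          rw [← div_le_iff₀' h10]
          exact h8
        · rw [abs_of_nonpos (by linarith : q - 1 ≤ 0)]
          have h8 : (2*(|a| + |b|))^(q-1) ≤ (|a| + |m|)^(q-1) :=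
            Real.rpow_le_rpow_of_nonpos hupos hu2 (by linarith)
          have h9 : (2*(|a| + |b|))^(q-1) = 2^(q-1) * (|a| + |b|)^(q-1) :=
            Real.mul_rpow (by norm_num) hMpos.le
          have h10 : (2:ℝ)^(-(q-1)) * 2^(q-1) = 1 := by
            rw [← Real.rpow_add two_pos]; norm_num
          have h11 : (0:ℝ) < (2:ℝ)^(-(q-1)) := Real.rpow_pos_of_pos two_pos _
          rw [h9] at h8
          have h12 := mul_le_mul_of_nonneg_left h8 h11.le
          calc (|a| + |b|)^(q-1) = 2^(-(q-1)) * (2^(q-1) * (|a| + |b|)^(q-1)) := by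
                rw [← mul_assoc, h10, one_mul]
            _ ≤ 2^(-(q-1)) * (|a| + |m|)^(q-1) := h12
      have hδ2 : (0:ℝ) ≤ (a-b)^2 := sq_nonneg _
      have step1 : (4 * Cq q * 2 ^ |q-1|)⁻¹ * ((|a| + |b|)^(q-1) * (a-b)^2)
          ≤ (4 * Cq q * 2 ^ |q-1|)⁻¹ * (2^|q-1| * (|a|+|m|)^(q-1) * (a-b)^2) := by
        apply mul_le_mul_of_nonneg_left _ (by positivity)
        have := mul_le_mul_of_nonneg_right mid hδ2
        linarith [this]
      have step2 : (4 * Cq q * 2 ^ |q-1|)⁻¹ * (2^|q-1| * (|a|+|m|)^(q-1) * (a-b)^2)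
          = (a-b)/2 * ((Cq q)⁻¹ * ((|a|+|m|)^(q-1) * (a - m))) := by
        rw [ham]
        field_simp
        ring
      linarith [step1, step2, hfin1, h6]
    · -- UPPER BOUND
      have h1 : (a - b) * Fp q b ≤ ∫ s in b..a, Fp q s := by
        have := _root_.intervalIntegral.integral_mono_on hab.le
          intervalIntegrable_const (hIIF b a) (fun s hs => Fp_mono hq hs.1)
        rw [_root_.intervalIntegral.integral_const, smul_eq_mul] at this
        linarith
      have h2 : gplus q a b ≤ (a-b) * (Fp q a - Fp q b) := by
        rw [repr]; nlinarith [h1]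
      have h3 := (incr hq (le_of_lt hab)).2
      have h4 : (a-b) * (Fp q a - Fp q b)
          ≤ (a-b) * (Cq q * ((|a| + |b|)^(q-1) * (a-b))) :=
        mul_le_mul_of_nonneg_left h3 hδ.le
      have hX : (0:ℝ) ≤ (|a| + |b|)^(q-1) * (a-b)^2 := by positivity
      have h5 : Cq q ≤ 4 * Cq q * 2^|q-1| := by nlinarith
      have h6 : (a-b) * (Cq q * ((|a| + |b|)^(q-1) * (a-b)))
          = Cq q * ((|a| + |b|)^(q-1) * (a-b)^2) := by ring
      have h7 : Cq q * ((|a| + |b|)^(q-1) * (a-b)^2)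
          ≤ (4 * Cq q * 2^|q-1|) * ((|a| + |b|)^(q-1) * (a-b)^2) :=
        mul_le_mul_of_nonneg_right h5 hX
      linarith

lemma gminus_eq (q a b : ℝ) : gminus q a b = gplus q (-a) (-b) := by
  rw [gplus, gminus]
  have e := _root_.intervalIntegral.integral_comp_neg (a := a) (b := b)
      (f := fun s => |s| ^ (q - 1) * max (s - -b) 0)
  rw [← e, _root_.intervalIntegral.integral_symm]
  have e2 : Set.EqOn (fun x => |(-x)| ^ (q-1) * max (-x - -b) 0)
      (fun x => |x| ^ (q-1) * max (b - x) 0) (Set.uIcc a b) := by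
    intro x _
    simp only [abs_neg]
    rw [show -x - -b = b - x from by ring]
  rw [_root_.intervalIntegral.integral_congr e2]
  ring

end GB

/-- Two-sided bounds for `𝔤_±` (Lemma B.1). -/
theorem g_two_sided_bounds (q : ℝ) (hq : 0 < q) :
    ∃ γ : ℝ, 1 ≤ γ ∧ ∀ a b : ℝ,
      (γ⁻¹ * ((|a| + |b|) ^ (q - 1) * (max (a - b) 0) ^ 2) ≤ gplus q a b ∧
        gplus q a b ≤ γ * ((|a| + |b|) ^ (q - 1) * (max (a - b) 0) ^ 2)) ∧
      (γ⁻¹ * ((|a| + |b|) ^ (q - 1) * (max (b - a) 0) ^ 2) ≤ gminus q a b ∧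
        gminus q a b ≤ γ * ((|a| + |b|) ^ (q - 1) * (max (b - a) 0) ^ 2)) := by
  refine ⟨4 * GB.Cq q * 2 ^ |q - 1|, ?_, ?_⟩
  · have hC1 := GB.one_le_Cq hq
    have hE1 : (1:ℝ) ≤ 2 ^ |q-1| := Real.one_le_rpow one_le_two (abs_nonneg _)
    nlinarith
  · intro a b
    refine ⟨GB.gplus_bound hq a b, ?_⟩
    have h := GB.gplus_bound hq (-a) (-b)
    rw [GB.gminus_eq q a b]
    simp only [abs_neg, show -a - -b = b - a from by ring] at h
    exact h

end
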